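/- Let A and B be n×n complex matrices such that 0 is a semisimple eigenvalue of both A and B (i.e., ker A = ker A² and ker B = ker B²). If det(I - sA - tB) = det(I - sA)·det(I - tB) for all scalars s, t, then rank(A) + rank(B) ≤ n. -/

import Mathlib

/-!
Write `P_M(s) = det (1 - s M)`, i.e. `charpolyRev M`, the reverse of the characteristic
polynomial. Its degree is `n` minus the multiplicity of `0` as a root of `charpoly M`, which is
the dimension of the generalized `0`-eigenspace; when `0` is semisimple that eigenspace is
`ker M`, so `deg P_M = rank M`. Taking `s = t` in the hypothesis gives `P_{A+B} = P_A P_B`,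
hence `rank A + rank B = deg P_{A+B} ≤ n`.
-/

open Matrix Polynomial

theorem Module.End.maxGenEigenspace_zero_eq_ker {K V : Type*} [Field K] [AddCommGroup V]
    [Module K V] (φ : Module.End K V) (h : LinearMap.ker φ = LinearMap.ker (φ * φ)) :
    φ.maxGenEigenspace 0 = LinearMap.ker φ := by
  have hpow : ∀ k, LinearMap.ker (φ ^ (1 + k)) = LinearMap.ker φ := fun k => by
    rw [← Module.End.ker_pow_constant (k := 1) (by rwa [pow_one, pow_succ, pow_one]) k, pow_one]
  ext x
  simp only [Module.End.mem_maxGenEigenspace, zero_smul, sub_zero]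
  refine ⟨?_, fun hx => ⟨1, by simpa using hx⟩⟩
  rintro ⟨_ | k, hk⟩
  · simp_all
  · rw [← hpow k, add_comm]
    exact hk

namespace Matrix

variable {n R K : Type*} [Fintype n] [DecidableEq n]

theorem eval_charpolyRev_eq_det [CommRing R] (M : Matrix n n R) (s : R) :
    M.charpolyRev.eval s = (1 - s • M).det := by
  rw [charpolyRev, ← coe_evalRingHom, RingHom.map_det]
  congr 1
  ext i j
  rcases eq_or_ne i j with rfl | hij <;> simp [*, mul_comm s]

theorem charpolyRev_ne_zero [CommRing R] [Nontrivial R] (M : Matrix n n R) :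
    M.charpolyRev ≠ 0 := fun h => by
  simpa [h] using M.eval_charpolyRev

theorem natDegree_charpolyRev_le [CommRing R] [Nontrivial R] (M : Matrix n n R) :
    M.charpolyRev.natDegree ≤ Fintype.card n := by
  rw [← reverse_charpoly, ← M.charpoly_natDegree_eq_dim]
  exact reverse_natDegree_le _

theorem natDegree_charpolyRev_eq_rank [Field K] (M : Matrix n n K)
    (hM : LinearMap.ker M.mulVecLin = LinearMap.ker (M * M).mulVecLin) :
    M.charpolyRev.natDegree = M.rank := by
  have hker : Module.End.maxGenEigenspace M.mulVecLin 0 = LinearMap.ker M.mulVecLin :=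
    Module.End.maxGenEigenspace_zero_eq_ker _ (by rwa [mulVecLin_mul] at hM)
  have htrailing : M.charpoly.natTrailingDegree = Module.finrank K (LinearMap.ker M.mulVecLin) := by
    rw [← charpoly_mulVecLin, ← LinearMap.finrank_maxGenEigenspace_zero_eq, hker]
  have hrank_nullity : M.rank + Module.finrank K (LinearMap.ker M.mulVecLin) = Fintype.card n := by
    simpa [Matrix.rank] using LinearMap.finrank_range_add_finrank_ker M.mulVecLin
  rw [← reverse_charpoly, reverse_natDegree, htrailing, charpoly_natDegree_eq_dim]
  omega

end Matrix

theorem stmt3 (n : ℕ) (A B : Matrix (Fin n) (Fin n) ℂ)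
    (hA : LinearMap.ker A.mulVecLin = LinearMap.ker (A * A).mulVecLin)
    (hB : LinearMap.ker B.mulVecLin = LinearMap.ker (B * B).mulVecLin)
    (hCS : ∀ s t : ℂ, (1 - s • A - t • B).det = (1 - s • A).det * (1 - t • B).det) :
    A.rank + B.rank ≤ n := by
  have hmul : (A + B).charpolyRev = A.charpolyRev * B.charpolyRev := by
    refine Polynomial.funext fun s => ?_
    simp only [eval_mul, eval_charpolyRev_eq_det, smul_add, ← sub_sub]
    exact hCS s s
  calc A.rank + B.rank
      = A.charpolyRev.natDegree + B.charpolyRev.natDegree := by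
        rw [natDegree_charpolyRev_eq_rank A hA, natDegree_charpolyRev_eq_rank B hB]
    _ = (A + B).charpolyRev.natDegree := by
        rw [hmul, natDegree_mul A.charpolyRev_ne_zero B.charpolyRev_ne_zero]
    _ ≤ n := by simpa using (A + B).natDegree_charpolyRev_le
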